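/- arXiv:math/9204241 — 2 statements merged into one kernel-verified Lean document; each statement's English description precedes it below -/
import Mathlib

section
/- Let k ≥ 1 and d ≥ 1 be integers with k < 2d, and let A₁, A₂ ⊂ [0,1] be sets of exactly 2d points, each containing 0 and 1. Let f, g : [0,1] → [0,1] be increasing C^k diffeomorphisms with f(A₁) = A₂ and g(A₁) = A₂, and let M > 0 be such that sup_{x,y∈[0,1]} |D^k f(x) − D^k f(y)| < M and sup_{x,y∈[0,1]} |D^k g(x) − D^k g(y)| < M. Then for every integer t with 0 ≤ t ≤ k one has sup_{x∈[0,1]} |D^t f(x) − D^t g(x)| ≤ 2M. -/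
/-!
Since `f` and `g` are increasing and map `A₁` onto the same set `A₂`, they agree on the `2d`
points of `A₁`, so `h = f - g` has `2d > k` zeros. By Rolle's theorem every derivative `D^t h`,
`t ≤ k`, still has a zero in `[0,1]`. At such a zero `z` of `D^k h`,
`|D^k h x| = |D^k h x - D^k h z| < 2M` by the variation bounds on `D^k f` and `D^k g`; and a
function with a zero in `[0,1]` whose derivative is bounded by `2M` is itself bounded by `2M`,
which gives the bound for every `t ≤ k` by downward induction.
-/

open Set Filter

noncomputable section

/-- The unit interval `[0,1] ⊆ ℝ`. -/
abbrev I01 : Set ℝ := Set.Icc (0:ℝ) 1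

/-- `ψ` satisfies an `ε`-Hölder bound with constant `H` on `[0,1]`. -/
def HolderBoundOn01 (ε H : ℝ) (ψ : ℝ → ℝ) : Prop :=
  ∀ x ∈ I01, ∀ y ∈ I01, |ψ x - ψ y| ≤ H * |x - y| ^ ε

/-- A `C^{k+ε}` Cantor system on `[0,1]` with `d` branches: each branch `g i` is a
`C^k` increasing contraction of `[0,1]` with `ε`-Hölder `k`-th derivative, the images
`g i ([0,1])` are disjoint closed intervals in increasing order, `g 0 0 = 0` and
`g (d-1) 1 = 1`. -/
structure IsCantorSystem {d : ℕ} (k : ℕ) (ε : ℝ) (g : Fin d → ℝ → ℝ) : Prop where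
  maps : ∀ i, Set.MapsTo (g i) I01 I01
  smooth : ∀ i, ContDiffOn ℝ k (g i) I01
  holder : ∀ i, ∃ H > 0, HolderBoundOn01 ε H (iteratedDerivWithin k (g i) I01)
  deriv_pos : ∀ i, ∀ x ∈ I01, 0 < derivWithin (g i) I01 x
  deriv_lt_one : ∀ i, ∀ x ∈ I01, derivWithin (g i) I01 x < 1
  ordered : ∀ i j : Fin d, i < j → g i 1 < g j 0
  first : ∀ i : Fin d, (i : ℕ) = 0 → g i 0 = 0
  last : ∀ i : Fin d, (i : ℕ) = d - 1 → g i 1 = 1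

/-- For a finite word `w = [w₁,…,wₙ]`, `wordMap g w = g_{wₙ} ∘ ⋯ ∘ g_{w₁}` (i.e. `G_w`). -/
def wordMap {d : ℕ} (g : Fin d → ℝ → ℝ) : List (Fin d) → ℝ → ℝ
  | [] => id
  | i :: w => fun x => wordMap g w (g i x)

/-- `|I_w|`, the length of the interval `I_w = G_w([0,1]) = [G_w 0, G_w 1]`. -/
def wordLen {d : ℕ} (g : Fin d → ℝ → ℝ) (w : List (Fin d)) : ℝ :=
  wordMap g w 1 - wordMap g w 0

/-- The scaling data of the word `w`: the first `d` coordinates are the ratios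
`|I_{i·w}|/|I_w|`, the last `d-1` coordinates are the `d-1` gap lengths between the
consecutive children `I_{1·w},…,I_{d·w}` divided by `|I_w|`. -/
def scalingData {d : ℕ} (g : Fin d → ℝ → ℝ) (w : List (Fin d)) : Fin (2*d-1) → ℝ :=
  fun m =>
    if h : (m : ℕ) < d then
      wordLen g ((⟨(m : ℕ), h⟩ : Fin d) :: w) / wordLen g w
    else
      (wordMap g w (g ⟨(m : ℕ) - d + 1, by have := m.isLt; omega⟩ 0)
        - wordMap g w (g ⟨(m : ℕ) - d, by have := m.isLt; omega⟩ 1)) / wordLen g w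

/-- The open simplex `Simp_{2d-2} ⊆ (0,1)^{2d-1}` of vectors with coordinate sum `1`. -/
def Simp (d : ℕ) : Set (Fin (2*d-1) → ℝ) :=
  {s | (∀ m, s m ∈ Set.Ioo (0:ℝ) 1) ∧ ∑ m, s m = 1}

/-- The initial word `j|_n = (j_1,…,j_n)` of a sequence `j ∈ Σ_d^dual = {1,…,d}^ℕ`. -/
def dword {d : ℕ} (j : ℕ → Fin d) (n : ℕ) : List (Fin d) :=
  List.ofFn (fun i : Fin n => j i)

/-- `S` is the scaling function of the system `g`:
`S(j) = lim_{n→∞} S_n(j|_n)` for every `j ∈ Σ_d^dual`. -/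
def HasScalingFunction {d : ℕ} (g : Fin d → ℝ → ℝ) (S : (ℕ → Fin d) → Fin (2*d-1) → ℝ) : Prop :=
  ∀ j : ℕ → Fin d,
    Filter.Tendsto (fun n => scalingData g (dword j n)) Filter.atTop (nhds (S j))

/-- `ρ_S(j,j')` where `n = #(j∩j')`:
`ρ_S(j,j') = sup_w ∏_{t=1}^{n} S((j_{t+1},…,j_n)·w)_{j_t}` (depends only on `j` and `n`). -/
def rhoS {d : ℕ} (S : (ℕ → Fin d) → Fin (2*d-1) → ℝ) (j : ℕ → Fin d) (n : ℕ) : ℝ :=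
  ⨆ w : ℕ → Fin d, ∏ t ∈ Finset.range n,
    S (fun m => if t + 1 + m < n then j (t + 1 + m) else w (t + 1 + m - n))
      ⟨((j t) : ℕ), by have := (j t).isLt; omega⟩

/-- Given a scaling vector `s ∈ Simp_{2d-2}`, the partition of `[0,1]` it determines has
`i`-th child interval starting at `childLeft s i = ∑_{m<i} (s_m + s_{d+m})`. -/
def childLeft {d : ℕ} (s : Fin (2*d-1) → ℝ) (i : Fin d) : ℝ :=
  ∑ m ∈ (Finset.range (i : ℕ)).attach,
    (s ⟨(m : ℕ), by have h := Finset.mem_range.mp m.2; have := i.isLt; omega⟩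
      + s ⟨d + (m : ℕ), by have h := Finset.mem_range.mp m.2; have := i.isLt; omega⟩)

/-- The right endpoint of the `i`-th child interval of the partition determined by `s`. -/
def childRight {d : ℕ} (s : Fin (2*d-1) → ℝ) (i : Fin d) : ℝ :=
  childLeft s i + s ⟨(i : ℕ), by have := i.isLt; omega⟩

/-- `A(j)`: the set of `2d` endpoints of the `d` child intervals of the partition of `[0,1]`
determined by the scaling vector `s = S(j)`. -/
def Apts {d : ℕ} (s : Fin (2*d-1) → ℝ) : Set ℝ :=
  ⋃ i : Fin d, {childLeft s i, childRight s i}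

/-- An increasing `C^k` diffeomorphism of `[0,1]`. -/
structure IsDiffeo01 (k : ℕ) (φ : ℝ → ℝ) : Prop where
  smooth : ContDiffOn ℝ k φ I01
  mono : StrictMonoOn φ I01
  deriv_pos : ∀ x ∈ I01, 0 < derivWithin φ I01 x
  bij : Set.BijOn φ I01 I01

/-- `D^k(A₁,A₂)`: increasing `C^k` diffeomorphisms of `[0,1]` mapping `A₁` onto `A₂`. -/
def Dk (k : ℕ) (A₁ A₂ : Set ℝ) : Set (ℝ → ℝ) :=
  {φ | IsDiffeo01 k φ ∧ φ '' A₁ = A₂}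

/-- `D^k_var(M)(A₁,A₂)`: members of `D^k(A₁,A₂)` whose `k`-th derivative has variation `< M`. -/
def DkVar (k : ℕ) (M : ℝ) (A₁ A₂ : Set ℝ) : Set (ℝ → ℝ) :=
  {φ | φ ∈ Dk k A₁ A₂ ∧ ∀ x ∈ I01, ∀ y ∈ I01,
    |iteratedDerivWithin k φ I01 x - iteratedDerivWithin k φ I01 y| < M}

/-- The renormalization `(L')⁻¹ ∘ φ ∘ L` of `φ`, where `L, L'` are the increasing affine
bijections from `[0,1]` onto `[a,b]` and `[a',b']` respectively. -/
def renorm (a b a' b' : ℝ) (φ : ℝ → ℝ) : ℝ → ℝ :=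
  fun x => (φ (a + (b - a) * x) - a') / (b' - a')

/-- `R_{j₀} φ`: restrict `φ` to the `j₀`-th child interval of the partition determined by `s`
(mapped to the `j₀`-th child interval of the partition determined by `s'`) and renormalize. -/
def Rmap {d : ℕ} (s s' : Fin (2*d-1) → ℝ) (j₀ : Fin d) (φ : ℝ → ℝ) : ℝ → ℝ :=
  renorm (childLeft s j₀) (childRight s j₀) (childLeft s' j₀) (childRight s' j₀) φ

/-- `j₀·j = (j₀, j_1, j_2, …)`. -/
def consSeq {d : ℕ} (j₀ : Fin d) (j : ℕ → Fin d) : ℕ → Fin d :=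
  fun m => if m = 0 then j₀ else j (m - 1)

/-- The Cantor set of the system: `C = ⋂_{n ≥ 1} ⋃_{w of length n} I_w`. -/
def systemCantorSet {d : ℕ} (g : Fin d → ℝ → ℝ) : Set ℝ :=
  ⋂ n : ℕ, ⋃ w ∈ {w : List (Fin d) | w.length = n + 1}, wordMap g w '' I01

end

theorem Set.Finite.eqOn_of_strictMonoOn_of_image_eq {α β : Type*} [LinearOrder α]
    [PartialOrder β] {s : Set α} (hs : s.Finite) {f g : α → β} (hf : StrictMonoOn f s)
    (hg : StrictMonoOn g s) (hfg : f '' s = g '' s) : EqOn f g s := by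
  have : Finite s := hs.to_subtype
  have hrestrict : s.domRestrict f = s.domRestrict g :=
    (hf.domRestrict.range_inj hg.domRestrict).mp (by rwa [range_domRestrict, range_domRestrict])
  exact fun x hx => congrFun hrestrict ⟨x, hx⟩

theorem exists_strictMono_derivWithin_eq_zero {a b : ℝ} {φ : ℝ → ℝ}
    (hφ : ContinuousOn φ (Icc a b)) {n : ℕ} {x : Fin (n + 1) → ℝ} (hx : StrictMono x)
    (hxI : ∀ i, x i ∈ Icc a b) (hφx : ∀ i, φ (x i) = 0) :
    ∃ y : Fin n → ℝ, StrictMono y ∧ ∀ i, y i ∈ Icc a b ∧ derivWithin φ (Icc a b) (y i) = 0 := by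
  have hrolle : ∀ i : Fin n, ∃ c ∈ Ioo (x i.castSucc) (x i.succ), deriv φ c = 0 := fun i =>
    exists_deriv_eq_zero (hx i.castSucc_lt_succ)
      (hφ.mono (Icc_subset_Icc (hxI _).1 (hxI _).2)) (by rw [hφx, hφx])
  choose y hy hy0 using hrolle
  have hyI : ∀ i, y i ∈ Ioo a b := fun i =>
    ⟨(hxI _).1.trans_lt (hy i).1, (hy i).2.trans_le (hxI _).2⟩
  refine ⟨y, fun i j hij => ?_, fun i => ⟨Ioo_subset_Icc_self (hyI i), ?_⟩⟩
  · calc y i < x i.succ := (hy i).2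
      _ ≤ x j.castSucc := hx.monotone (Fin.succ_le_castSucc_iff.mpr hij)
      _ < y j := (hy j).1
  · rw [derivWithin_of_mem_nhds (Icc_mem_nhds (hyI i).1 (hyI i).2), hy0]

theorem exists_strictMono_iteratedDerivWithin_eq_zero {a b : ℝ} (hab : a < b) {n t : ℕ}
    {h : ℝ → ℝ} (hh : ContDiffOn ℝ t h (Icc a b)) {x : Fin (n + t) → ℝ} (hx : StrictMono x)
    (hxI : ∀ i, x i ∈ Icc a b) (hx0 : ∀ i, h (x i) = 0) :
    ∃ y : Fin n → ℝ, StrictMono y ∧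
      ∀ i, y i ∈ Icc a b ∧ iteratedDerivWithin t h (Icc a b) (y i) = 0 := by
  induction t generalizing h with
  | zero => exact ⟨x, hx, fun i => ⟨hxI i, hx0 i⟩⟩
  | succ t ih =>
    obtain ⟨y, hy, hy0⟩ := exists_strictMono_derivWithin_eq_zero hh.continuousOn hx hxI hx0
    rw [iteratedDerivWithin_succ']
    exact ih (hh.derivWithin (uniqueDiffOn_Icc hab) le_rfl) hy (fun i => (hy0 i).1)
      fun i => (hy0 i).2

theorem abs_le_mul_of_abs_derivWithin_le {a b C : ℝ} {φ : ℝ → ℝ}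
    (hφ : DifferentiableOn ℝ φ (Icc a b)) (hφ' : ∀ x ∈ Icc a b, |derivWithin φ (Icc a b) x| ≤ C)
    {z : ℝ} (hz : z ∈ Icc a b) (hφz : φ z = 0) {x : ℝ} (hx : x ∈ Icc a b) :
    |φ x| ≤ C * (b - a) := by
  have hC : 0 ≤ C := (abs_nonneg _).trans (hφ' z hz)
  have hxz : |x - z| ≤ b - a :=
    abs_sub_le_iff.mpr ⟨by linarith [hx.2, hz.1], by linarith [hx.1, hz.2]⟩
  calc |φ x| = |φ x - φ z| := by rw [hφz, sub_zero]
    _ ≤ C * |x - z| := (convex_Icc a b).norm_image_sub_le_of_norm_derivWithin_le hφ hφ' hz hx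
    _ ≤ C * (b - a) := mul_le_mul_of_nonneg_left hxz hC

theorem abs_iteratedDerivWithin_le_of_strictMono_zeros {a b C : ℝ} (hab : a < b) {k : ℕ}
    {h : ℝ → ℝ} (hh : ContDiffOn ℝ k h (Icc a b)) {x : Fin (k + 1) → ℝ} (hx : StrictMono x)
    (hxI : ∀ i, x i ∈ Icc a b) (hx0 : ∀ i, h (x i) = 0)
    (hC : ∀ y ∈ Icc a b, ∀ z ∈ Icc a b,
      |iteratedDerivWithin k h (Icc a b) y - iteratedDerivWithin k h (Icc a b) z| ≤ C)
    {t : ℕ} (ht : t ≤ k) :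
    ∀ y ∈ Icc a b, |iteratedDerivWithin t h (Icc a b) y| ≤ C * (b - a) ^ (k - t) := by
  have hzero : ∀ s ≤ k, ∃ z ∈ Icc a b, iteratedDerivWithin s h (Icc a b) z = 0 := by
    intro s hs
    have hle : 1 + s ≤ k + 1 := by omega
    obtain ⟨z, -, hz⟩ := exists_strictMono_iteratedDerivWithin_eq_zero hab (n := 1)
      (hh.of_le (by exact_mod_cast hs)) (x := fun i => x (Fin.castLE hle i))
      (hx.comp (Fin.strictMono_castLE hle)) (fun _ => hxI _) (fun _ => hx0 _)
    exact ⟨z 0, hz 0⟩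
  induction ht using Nat.decreasingInduction with
  | self =>
    intro y hy
    obtain ⟨z, hz, hz0⟩ := hzero k le_rfl
    simpa [hz0] using hC y hy z hz
  | of_succ t htk ih =>
    intro y hy
    obtain ⟨z, hz, hz0⟩ := hzero t htk.le
    have := abs_le_mul_of_abs_derivWithin_le
      (hh.differentiableOn_iteratedDerivWithin (by exact_mod_cast htk) (uniqueDiffOn_Icc hab))
      (fun y hy => by rw [← iteratedDerivWithin_succ]; exact ih y hy) hz hz0 hy
    rwa [mul_assoc, ← pow_succ, show k - (t + 1) + 1 = k - t by omega] at this

theorem stmt0_general (k d : ℕ) (hkd : k < 2*d)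
    (A₁ A₂ : Set ℝ) (hA₁sub : A₁ ⊆ I01)
    (hA₁card : A₁.ncard = 2*d)
    (M : ℝ) (f g : ℝ → ℝ)
    (hf : f ∈ DkVar k M A₁ A₂) (hg : g ∈ DkVar k M A₁ A₂) :
    ∀ t ≤ k, ∀ x ∈ I01,
      |iteratedDerivWithin t f I01 x - iteratedDerivWithin t g I01 x| ≤ 2 * M := by
  obtain ⟨⟨hfD, hfA⟩, hfvar⟩ := hf
  obtain ⟨⟨hgD, hgA⟩, hgvar⟩ := hg
  have hsub : ∀ t ≤ k, ∀ x ∈ I01, iteratedDerivWithin t (f - g) I01 x =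
      iteratedDerivWithin t f I01 x - iteratedDerivWithin t g I01 x := fun t ht x hx =>
    iteratedDerivWithin_sub hx (uniqueDiffOn_Icc zero_lt_one)
      ((hfD.smooth.of_le (by exact_mod_cast ht)).contDiffWithinAt hx)
      ((hgD.smooth.of_le (by exact_mod_cast ht)).contDiffWithinAt hx)
  have hvar : ∀ y ∈ I01, ∀ z ∈ I01,
      |iteratedDerivWithin k (f - g) I01 y - iteratedDerivWithin k (f - g) I01 z| ≤ 2 * M := by
    intro y hy z hz
    obtain ⟨hf₁, hf₂⟩ := abs_lt.mp (hfvar y hy z hz)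
    obtain ⟨hg₁, hg₂⟩ := abs_lt.mp (hgvar y hy z hz)
    rw [hsub k le_rfl y hy, hsub k le_rfl z hz]
    exact abs_sub_le_iff.mpr ⟨by linarith, by linarith⟩
  have hA₁ : A₁.Finite := finite_of_ncard_ne_zero (by omega)
  have hfg : EqOn f g A₁ := hA₁.eqOn_of_strictMonoOn_of_image_eq (hfD.mono.mono hA₁sub)
    (hgD.mono.mono hA₁sub) (hfA.trans hgA.symm)
  let e := hA₁.toFinset.orderEmbOfFin (k := 2*d)
    (by rw [← ncard_eq_toFinset_card _ hA₁, hA₁card])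
  have he : ∀ i, e i ∈ A₁ := fun i => hA₁.mem_toFinset.mp (Finset.orderEmbOfFin_mem _ _ i)
  intro t ht x hx
  have := abs_iteratedDerivWithin_le_of_strictMono_zeros zero_lt_one
    (h := f - g) (hfD.smooth.sub hgD.smooth) (x := fun i => e (Fin.castLE hkd i))
    (e.strictMono.comp (Fin.strictMono_castLE hkd)) (fun _ => hA₁sub (he _))
    (fun _ => sub_eq_zero.mpr (hfg (he _))) hvar ht x hx
  rwa [hsub t ht x hx, sub_zero, one_pow, mul_one] at this

/-- If `f, g` are increasing `C^k` diffeomorphisms of `[0,1]` mapping a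
`2d`-point set `A₁ ∋ 0,1` onto a `2d`-point set `A₂ ∋ 0,1` (with `k < 2d`), whose `k`-th
derivatives each have variation `< M`, then `sup |D^t f - D^t g| ≤ 2M` for all `0 ≤ t ≤ k`. -/
theorem stmt0 (k d : ℕ) (hk : 1 ≤ k) (hd : 1 ≤ d) (hkd : k < 2*d)
    (A₁ A₂ : Set ℝ) (hA₁sub : A₁ ⊆ I01) (hA₂sub : A₂ ⊆ I01)
    (hA₁card : A₁.ncard = 2*d) (hA₂card : A₂.ncard = 2*d)
    (h0₁ : (0:ℝ) ∈ A₁) (h1₁ : (1:ℝ) ∈ A₁) (h0₂ : (0:ℝ) ∈ A₂) (h1₂ : (1:ℝ) ∈ A₂)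
    (M : ℝ) (hM : 0 < M) (f g : ℝ → ℝ)
    (hf : f ∈ DkVar k M A₁ A₂) (hg : g ∈ DkVar k M A₁ A₂) :
    ∀ t ≤ k, ∀ x ∈ I01,
      |iteratedDerivWithin t f I01 x - iteratedDerivWithin t g I01 x| ≤ 2 * M :=
  stmt0_general k d hkd A₁ A₂ hA₁sub hA₁card M f g hf hg
end

section
/- Let g_1,…,g_d be a C^{1+ε} Cantor system on [0,1]. Then there exist K > 0 and γ ∈ (0,1) such that for all finite words u of length n ≥ 1 and v of length m ≥ 1, |S_n(u) − S_m(v)|_∞ ≤ K γ^p, where p is the length of the longest common initial segment of u and v. -/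
open Set Filter

/-! A Cantor system contracts uniformly, by some `λ < 1`, so the interval `I_w` of the common
prefix `w` of `u` and `v` has length at most `λ^p`. Each coordinate of `S_n(u)` is the relative
length `|G_u(J)| / |G_u([0,1])|` of a fixed interval `J ⊆ [0,1]`, and for `u = w·t` this is the
relative length of `G_w(J)` in `I_w` after applying `G_t`. Since the branches are `C^{1+ε}` with
derivatives bounded away from zero, `log G_t'` is `ε`-Hölder with a constant `D` independent of `t`:
along an orbit the distances shrink geometrically, so the Hölder constants of the factors sum up.
By the mean value theorem `G_t` therefore changes relative lengths inside `I_w` by at most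
`D |I_w|^ε e^D ≤ D e^D (λ^ε)^p`, and `S_n(u)` and `S_m(v)` are both that close to `S_p(w)`. -/

open Real

lemma Real.abs_exp_sub_one_le_mul_exp (x : ℝ) : |exp x - 1| ≤ |x| * exp |x| := by
  have h₁ : 1 - exp x ≤ -x := by linarith [add_one_le_exp x]
  have h₂ : exp x - 1 ≤ x * exp x := by
    have := mul_le_mul_of_nonneg_right (one_sub_le_exp_neg x) (exp_pos x).le
    rw [← exp_add, neg_add_cancel, exp_zero] at this
    linarith
  rcases le_total 0 x with hx | hx
  · rw [abs_of_nonneg hx, abs_of_nonneg (by linarith [one_le_exp hx])]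
    linarith
  · rw [abs_of_nonpos hx, abs_of_nonpos (by linarith [exp_le_one_iff.2 hx])]
    nlinarith [one_le_exp (neg_nonneg.2 hx)]

lemma Real.abs_log_sub_log_le {a b c : ℝ} (hc : 0 < c) (ha : c ≤ a) (hb : c ≤ b) :
    |log a - log b| ≤ |a - b| / c := by
  have key : ∀ x y, c ≤ x → c ≤ y → log x - log y ≤ |x - y| / c := fun x y hx hy => by
    rw [← log_div (by linarith) (by linarith)]
    calc log (x / y) ≤ x / y - 1 := log_le_sub_one_of_pos (div_pos (by linarith) (by linarith))
      _ = (x - y) / y := by rw [sub_div, div_self (hc.trans_le hy).ne']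
      _ ≤ |x - y| / c := by gcongr; exact le_abs_self _
  exact abs_sub_le_iff.2 ⟨key a b ha hb, abs_sub_comm a b ▸ key b a hb ha⟩

lemma exists_mem_Icc_sub_eq_mul_sub {f f' : ℝ → ℝ} {x y : ℝ} (hxy : x < y)
    (hf : ∀ z ∈ Icc x y, HasDerivWithinAt f (f' z) (Icc x y) z) :
    ∃ ξ ∈ Icc x y, f y - f x = f' ξ * (y - x) := by
  obtain ⟨ξ, hξ, h⟩ := exists_hasDerivAt_eq_slope f f' hxy
    (fun z hz => (hf z hz).continuousWithinAt)
    (fun z hz => (hf z (Ioo_subset_Icc_self hz)).hasDerivAt (Icc_mem_nhds hz.1 hz.2))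
  exact ⟨ξ, Ioo_subset_Icc_self hξ, by rw [h, div_mul_cancel₀ _ (sub_ne_zero.2 hxy.ne')]⟩

lemma abs_ratio_image_sub_ratio_le {f f' : ℝ → ℝ} {z₀ a b z₁ σ : ℝ}
    (h₀ : z₀ ≤ a) (hab : a < b) (h₁ : b ≤ z₁)
    (hf : ∀ x ∈ Icc z₀ z₁, HasDerivWithinAt f (f' x) (Icc z₀ z₁) x)
    (hpos : ∀ x ∈ Icc z₀ z₁, 0 < f' x)
    (hosc : ∀ x ∈ Icc z₀ z₁, ∀ y ∈ Icc z₀ z₁, |log (f' x) - log (f' y)| ≤ σ) :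
    |(f b - f a) / (f z₁ - f z₀) - (b - a) / (z₁ - z₀)| ≤ σ * exp σ := by
  have hsub : Icc a b ⊆ Icc z₀ z₁ := Icc_subset_Icc h₀ h₁
  have hz : z₀ < z₁ := by linarith
  obtain ⟨ξ, hξ, hfab⟩ := exists_mem_Icc_sub_eq_mul_sub hab
    (fun x hx => (hf x (hsub hx)).mono hsub)
  obtain ⟨η, hη, hfz⟩ := exists_mem_Icc_sub_eq_mul_sub hz hf
  have hξ₀ := hpos ξ (hsub hξ)
  have hη₀ := hpos η hη
  have hq : |(b - a) / (z₁ - z₀)| ≤ 1 := by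
    rw [abs_of_pos (div_pos (by linarith) (by linarith)), div_le_one (by linarith)]
    linarith
  have hlog := hosc ξ (hsub hξ) η hη
  have hexp : |exp (log (f' ξ) - log (f' η)) - 1| ≤ σ * exp σ :=
    (abs_exp_sub_one_le_mul_exp _).trans
      (mul_le_mul hlog (exp_le_exp.2 hlog) (exp_pos _).le ((abs_nonneg _).trans hlog))
  calc |(f b - f a) / (f z₁ - f z₀) - (b - a) / (z₁ - z₀)|
      = |(b - a) / (z₁ - z₀)| * |exp (log (f' ξ) - log (f' η)) - 1| := by
        rw [← abs_mul, exp_sub, exp_log hξ₀, exp_log hη₀, hfab, hfz]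
        congr 1
        field_simp
    _ ≤ 1 * (σ * exp σ) := mul_le_mul hq hexp (abs_nonneg _) zero_le_one
    _ = σ * exp σ := one_mul _

section WordMaps

variable {d : ℕ} {g : Fin d → ℝ → ℝ}

lemma wordMap_append (w t : List (Fin d)) (x : ℝ) :
    wordMap g (w ++ t) x = wordMap g t (wordMap g w x) := by
  induction w generalizing x with
  | nil => rfl
  | cons i w ih => exact ih (g i x)

lemma mapsTo_wordMap (hmaps : ∀ i, MapsTo (g i) I01 I01) :
    ∀ w : List (Fin d), MapsTo (wordMap g w) I01 I01
  | [] => mapsTo_id _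
  | i :: w => (mapsTo_wordMap hmaps w).comp (hmaps i)

lemma abs_wordMap_sub_le {lam : ℝ} (hmaps : ∀ i, MapsTo (g i) I01 I01) (hlam : 0 ≤ lam)
    (hlip : ∀ i, ∀ x ∈ I01, ∀ y ∈ I01, |g i x - g i y| ≤ lam * |x - y|) :
    ∀ w : List (Fin d), ∀ x ∈ I01, ∀ y ∈ I01,
      |wordMap g w x - wordMap g w y| ≤ lam ^ w.length * |x - y|
  | [], x, _, y, _ => by simp [wordMap]
  | i :: w, x, hx, y, hy => calc
      |wordMap g w (g i x) - wordMap g w (g i y)| ≤ lam ^ w.length * |g i x - g i y| :=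
        abs_wordMap_sub_le hmaps hlam hlip w _ (hmaps i hx) _ (hmaps i hy)
      _ ≤ lam ^ w.length * (lam * |x - y|) := by gcongr; exact hlip i x hx y hy
      _ = lam ^ (i :: w).length * |x - y| := by rw [List.length_cons, pow_succ, mul_assoc]

noncomputable def wordDeriv (g : Fin d → ℝ → ℝ) : List (Fin d) → ℝ → ℝ
  | [] => fun _ => 1
  | i :: w => fun x => wordDeriv g w (g i x) * derivWithin (g i) I01 x

lemma hasDerivWithinAt_wordMap (hmaps : ∀ i, MapsTo (g i) I01 I01)
    (hdiff : ∀ i, DifferentiableOn ℝ (g i) I01) :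
    ∀ w : List (Fin d), ∀ x ∈ I01, HasDerivWithinAt (wordMap g w) (wordDeriv g w x) I01 x
  | [], x, _ => hasDerivWithinAt_id x I01
  | i :: w, x, hx =>
    (hasDerivWithinAt_wordMap hmaps hdiff w (g i x) (hmaps i hx)).comp x
      (hdiff i x hx).hasDerivWithinAt (hmaps i)

lemma wordDeriv_pos (hmaps : ∀ i, MapsTo (g i) I01 I01)
    (hpos : ∀ i, ∀ x ∈ I01, 0 < derivWithin (g i) I01 x) :
    ∀ w : List (Fin d), ∀ x ∈ I01, 0 < wordDeriv g w x
  | [], _, _ => one_pos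
  | i :: w, x, hx => mul_pos (wordDeriv_pos hmaps hpos w _ (hmaps i hx)) (hpos i x hx)

lemma strictMonoOn_wordMap (hmaps : ∀ i, MapsTo (g i) I01 I01)
    (hdiff : ∀ i, DifferentiableOn ℝ (g i) I01)
    (hpos : ∀ i, ∀ x ∈ I01, 0 < derivWithin (g i) I01 x) (w : List (Fin d)) :
    StrictMonoOn (wordMap g w) I01 :=
  strictMonoOn_of_hasDerivWithinAt_pos (convex_Icc 0 1)
    (fun x hx => (hasDerivWithinAt_wordMap hmaps hdiff w x hx).continuousWithinAt)
    (fun x hx =>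
      (hasDerivWithinAt_wordMap hmaps hdiff w x (interior_subset hx)).mono interior_subset)
    (fun x hx => wordDeriv_pos hmaps hpos w x (interior_subset hx))

/-- The fixed-point condition on `D` is what lets the induction absorb one more letter: the new
branch contributes `H / c` and shrinks the distances seen by the rest of the word by `λ`. -/
lemma abs_log_wordDeriv_sub_le {ε c H lam D : ℝ} (hmaps : ∀ i, MapsTo (g i) I01 I01)
    (hε : 0 ≤ ε) (hc : 0 < c) (hcle : ∀ i, ∀ x ∈ I01, c ≤ derivWithin (g i) I01 x)
    (hhol : ∀ i, HolderBoundOn01 ε H (derivWithin (g i) I01)) (hlam : 0 ≤ lam)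
    (hlip : ∀ i, ∀ x ∈ I01, ∀ y ∈ I01, |g i x - g i y| ≤ lam * |x - y|)
    (hD : 0 ≤ D) (hDfix : H / c + D * lam ^ ε ≤ D) :
    ∀ w : List (Fin d), ∀ x ∈ I01, ∀ y ∈ I01,
      |log (wordDeriv g w x) - log (wordDeriv g w y)| ≤ D * |x - y| ^ ε
  | [], x, _, y, _ => by simp only [wordDeriv, sub_self, abs_zero]; positivity
  | i :: w, x, hx, y, hy => by
    have hpos : ∀ i, ∀ x ∈ I01, 0 < derivWithin (g i) I01 x :=
      fun i x hx => hc.trans_le (hcle i x hx)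
    have hword := abs_log_wordDeriv_sub_le hmaps hε hc hcle hhol hlam hlip hD hDfix w
      _ (hmaps i hx) _ (hmaps i hy)
    have hbranch : |log (derivWithin (g i) I01 x) - log (derivWithin (g i) I01 y)|
        ≤ H / c * |x - y| ^ ε := calc
      _ ≤ |derivWithin (g i) I01 x - derivWithin (g i) I01 y| / c :=
          abs_log_sub_log_le hc (hcle i x hx) (hcle i y hy)
      _ ≤ H * |x - y| ^ ε / c := by gcongr; exact hhol i x hx y hy
      _ = H / c * |x - y| ^ ε := by ring
    have hcontr : |g i x - g i y| ^ ε ≤ lam ^ ε * |x - y| ^ ε := by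
      rw [← mul_rpow hlam (abs_nonneg _)]
      exact rpow_le_rpow (abs_nonneg _) (hlip i x hx y hy) hε
    simp only [wordDeriv]
    rw [log_mul (wordDeriv_pos hmaps hpos w _ (hmaps i hx)).ne' (hpos i x hx).ne',
      log_mul (wordDeriv_pos hmaps hpos w _ (hmaps i hy)).ne' (hpos i y hy).ne']
    calc _ = |(log (wordDeriv g w (g i x)) - log (wordDeriv g w (g i y)))
            + (log (derivWithin (g i) I01 x) - log (derivWithin (g i) I01 y))| := by
          congr 1; ring
      _ ≤ D * (lam ^ ε * |x - y| ^ ε) + H / c * |x - y| ^ ε :=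
          (abs_add_le _ _).trans (add_le_add (hword.trans (by gcongr)) hbranch)
      _ = (H / c + D * lam ^ ε) * |x - y| ^ ε := by ring
      _ ≤ D * |x - y| ^ ε := by gcongr

lemma wordLen_le_pow {lam : ℝ} (hmaps : ∀ i, MapsTo (g i) I01 I01) (hlam : 0 ≤ lam)
    (hlip : ∀ i, ∀ x ∈ I01, ∀ y ∈ I01, |g i x - g i y| ≤ lam * |x - y|) (w : List (Fin d)) :
    wordLen g w ≤ lam ^ w.length := by
  have := abs_wordMap_sub_le hmaps hlam hlip w 1 ⟨zero_le_one, le_rfl⟩ 0 ⟨le_rfl, zero_le_one⟩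
  rw [sub_zero, abs_one, mul_one] at this
  exact (le_abs_self _).trans this

noncomputable def wordRatio (g : Fin d → ℝ → ℝ) (w : List (Fin d)) (a b : ℝ) : ℝ :=
  (wordMap g w b - wordMap g w a) / wordLen g w

lemma abs_wordRatio_append_sub_le {ε D a b : ℝ} (hmaps : ∀ i, MapsTo (g i) I01 I01)
    (hdiff : ∀ i, DifferentiableOn ℝ (g i) I01)
    (hpos : ∀ i, ∀ x ∈ I01, 0 < derivWithin (g i) I01 x) (hε : 0 ≤ ε) (hD : 0 ≤ D)
    (ha : a ∈ I01) (hb : b ∈ I01) (hab : a < b) (w : List (Fin d)) {t : List (Fin d)}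
    (hdist : ∀ x ∈ I01, ∀ y ∈ I01,
      |log (wordDeriv g t x) - log (wordDeriv g t y)| ≤ D * |x - y| ^ ε) :
    |wordRatio g (w ++ t) a b - wordRatio g w a b|
      ≤ D * wordLen g w ^ ε * exp (D * wordLen g w ^ ε) := by
  have hmono := strictMonoOn_wordMap hmaps hdiff hpos w
  have h₀ : wordMap g w 0 ∈ I01 := mapsTo_wordMap hmaps w ⟨le_rfl, zero_le_one⟩
  have h₁ : wordMap g w 1 ∈ I01 := mapsTo_wordMap hmaps w ⟨zero_le_one, le_rfl⟩
  have hsub : Icc (wordMap g w 0) (wordMap g w 1) ⊆ I01 := Icc_subset_Icc h₀.1 h₁.2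
  simp only [wordRatio, wordLen, wordMap_append]
  refine abs_ratio_image_sub_ratio_le (hmono.monotoneOn ⟨le_rfl, zero_le_one⟩ ha ha.1)
    (hmono ha hb hab) (hmono.monotoneOn hb ⟨zero_le_one, le_rfl⟩ hb.2)
    (fun x hx => (hasDerivWithinAt_wordMap hmaps hdiff t x (hsub hx)).mono hsub)
    (fun x hx => wordDeriv_pos hmaps hpos t x (hsub hx))
    (fun x hx y hy => (hdist x (hsub hx) y (hsub hy)).trans ?_)
  have hxy : |x - y| ≤ wordMap g w 1 - wordMap g w 0 :=
    abs_sub_le_iff.2 ⟨by linarith [hx.2, hy.1], by linarith [hx.1, hy.2]⟩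
  gcongr

end WordMaps

namespace IsCantorSystem

variable {d k : ℕ} {ε : ℝ} {g : Fin d → ℝ → ℝ}

lemma differentiableOn (hg : IsCantorSystem k ε g) (hk : k ≠ 0) (i : Fin d) :
    DifferentiableOn ℝ (g i) I01 :=
  (hg.smooth i).differentiableOn (by exact_mod_cast hk)

lemma exists_deriv_mem_Icc (hg : IsCantorSystem k ε g) (hk : k ≠ 0) :
    ∃ c > 0, ∃ lam ∈ Ioo (0 : ℝ) 1, ∀ i, ∀ x ∈ I01, derivWithin (g i) I01 x ∈ Icc c lam := by
  set F : Fin d × ℝ → ℝ := fun p => derivWithin (g p.1) I01 p.2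
  have hK : IsCompact (univ ×ˢ I01 : Set (Fin d × ℝ)) := isCompact_univ.prod isCompact_Icc
  have hF : ContinuousOn F (univ ×ˢ I01) := continuousOn_prod_of_discrete_left.2 fun i => by
    simp only [mem_prod, mem_univ, true_and, ofPred_mem_eq]
    exact (hg.smooth i).continuousOn_derivWithin (uniqueDiffOn_Icc zero_lt_one)
      (by exact_mod_cast Nat.one_le_iff_ne_zero.2 hk)
  obtain ⟨c, hc, hcF⟩ := hK.exists_forall_le' hF (a := 0)
    fun p hp => hg.deriv_pos p.1 p.2 hp.2
  obtain ⟨δ, hδ, hδF⟩ := hK.exists_forall_le' (f := fun p => 1 - F p)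
    (continuousOn_const.sub hF) (a := 0)
    fun p hp => sub_pos.2 (hg.deriv_lt_one p.1 p.2 hp.2)
  refine ⟨c, hc, 1 - min δ (1 / 2), ⟨by linarith [min_le_right δ (1 / 2)], by
    linarith [lt_min hδ one_half_pos]⟩, fun i x hx => ⟨hcF (i, x) ⟨trivial, hx⟩, ?_⟩⟩
  linarith [hδF (i, x) ⟨trivial, hx⟩, min_le_left δ (1 / 2)]

lemma abs_sub_le_of_derivWithin_le (hg : IsCantorSystem k ε g) (hk : k ≠ 0) {lam : ℝ}
    (hle : ∀ i, ∀ x ∈ I01, derivWithin (g i) I01 x ≤ lam) (i : Fin d) :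
    ∀ x ∈ I01, ∀ y ∈ I01, |g i x - g i y| ≤ lam * |x - y| := fun x hx y hy => by
  simpa only [Real.norm_eq_abs] using
    (convex_Icc (0 : ℝ) 1).norm_image_sub_le_of_norm_derivWithin_le (hg.differentiableOn hk i)
      (fun z hz => by
        rw [Real.norm_eq_abs, abs_of_pos (hg.deriv_pos i z hz)]
        exact hle i z hz) hy hx

lemma exists_holderBound_derivWithin (hg : IsCantorSystem 1 ε g) :
    ∃ H > 0, ∀ i, HolderBoundOn01 ε H (derivWithin (g i) I01) := by
  choose H _ hHol using hg.holder
  obtain ⟨M, hM⟩ := Finite.exists_le H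
  refine ⟨max M 1, lt_max_of_lt_right one_pos, fun i x hx y hy => ?_⟩
  have := hHol i x hx y hy
  rw [iteratedDerivWithin_one] at this
  exact this.trans (by gcongr; exact le_max_of_le_left (hM i))

lemma exists_abs_wordRatio_append_sub_le (hg : IsCantorSystem 1 ε g) (hε : 0 < ε) :
    ∃ C > 0, ∃ γ ∈ Ioo (0 : ℝ) 1, ∀ a ∈ I01, ∀ b ∈ I01, a < b → ∀ w t : List (Fin d),
      |wordRatio g (w ++ t) a b - wordRatio g w a b| ≤ C * γ ^ w.length := by
  obtain ⟨c, hc, lam, ⟨hlam₀, hlam₁⟩, hbounds⟩ := hg.exists_deriv_mem_Icc one_ne_zero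
  obtain ⟨H, hH, hhol⟩ := hg.exists_holderBound_derivWithin
  have hlip := hg.abs_sub_le_of_derivWithin_le one_ne_zero fun i x hx => (hbounds i x hx).2
  have hγ₀ : 0 < lam ^ ε := rpow_pos_of_pos hlam₀ ε
  have hγ₁ : lam ^ ε < 1 := rpow_lt_one hlam₀.le hlam₁ hε
  set D := H / c / (1 - lam ^ ε) with hD_def
  have hD : 0 < D := div_pos (div_pos hH hc) (sub_pos.2 hγ₁)
  have hD_fix : H / c + D * lam ^ ε = D := by
    rw [hD_def]
    field_simp [(sub_pos.2 hγ₁).ne']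
    ring
  have hdist := abs_log_wordDeriv_sub_le hg.maps hε.le hc (fun i x hx => (hbounds i x hx).1)
    hhol hlam₀.le hlip hD.le hD_fix.le
  refine ⟨D * exp D, by positivity, lam ^ ε, ⟨hγ₀, hγ₁⟩, fun a ha b hb hab w t => ?_⟩
  have hlen₀ : 0 ≤ wordLen g w := (sub_pos.2 (strictMonoOn_wordMap hg.maps
    (hg.differentiableOn one_ne_zero) hg.deriv_pos w ⟨le_rfl, zero_le_one⟩ ⟨zero_le_one, le_rfl⟩
    zero_lt_one)).le
  have hlen := wordLen_le_pow hg.maps hlam₀.le hlip w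
  have hσ : D * wordLen g w ^ ε ≤ D * (lam ^ ε) ^ w.length := by
    rw [rpow_pow_comm hlam₀.le]
    gcongr
  have hσD : D * wordLen g w ^ ε ≤ D := mul_le_of_le_one_right hD.le
    (rpow_le_one hlen₀ (hlen.trans (pow_le_one₀ hlam₀.le hlam₁.le)) hε.le)
  calc _ ≤ D * wordLen g w ^ ε * exp (D * wordLen g w ^ ε) :=
        abs_wordRatio_append_sub_le hg.maps (hg.differentiableOn one_ne_zero) hg.deriv_pos hε.le
          hD.le ha hb hab w (hdist t)
    _ ≤ D * (lam ^ ε) ^ w.length * exp D := by gcongr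
    _ = D * exp D * (lam ^ ε) ^ w.length := by ring

lemma exists_scalingData_eq_wordRatio (hg : IsCantorSystem k ε g) (hk : k ≠ 0)
    (m : Fin (2 * d - 1)) :
    ∃ a ∈ I01, ∃ b ∈ I01, a < b ∧ ∀ w, scalingData g w m = wordRatio g w a b := by
  by_cases h : (m : ℕ) < d
  · refine ⟨g ⟨m, h⟩ 0, hg.maps _ ⟨le_rfl, zero_le_one⟩, g ⟨m, h⟩ 1,
      hg.maps _ ⟨zero_le_one, le_rfl⟩, ?_, fun w => ?_⟩
    · simpa [wordMap] using strictMonoOn_wordMap hg.maps (hg.differentiableOn hk) hg.deriv_pos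
        [⟨m, h⟩] ⟨le_rfl, zero_le_one⟩ ⟨zero_le_one, le_rfl⟩ zero_lt_one
    · simp only [scalingData, dif_pos h, wordRatio, wordLen, wordMap]
  · refine ⟨g ⟨m - d, by omega⟩ 1, hg.maps _ ⟨zero_le_one, le_rfl⟩, g ⟨m - d + 1, by omega⟩ 0,
      hg.maps _ ⟨le_rfl, zero_le_one⟩, hg.ordered _ _ (Fin.mk_lt_mk.2 (by omega)), fun w => ?_⟩
    simp only [scalingData, dif_neg h, wordRatio]

end IsCantorSystem

theorem stmt2_general (d : ℕ) (ε : ℝ) (hε : ε ∈ Set.Ioc (0:ℝ) 1)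
    (g : Fin d → ℝ → ℝ) (hg : IsCantorSystem 1 ε g) :
    ∃ K > 0, ∃ γ ∈ Set.Ioo (0:ℝ) 1,
      ∀ u v : List (Fin d), u ≠ [] → v ≠ [] →
        ∀ p : ℕ, p ≤ u.length → p ≤ v.length → u.take p = v.take p →
          (p < u.length → p < v.length → u[p]? ≠ v[p]?) →
          ∀ m, |scalingData g u m - scalingData g v m| ≤ K * γ ^ p := by
  obtain ⟨C, hC, γ, hγ, hratio⟩ := hg.exists_abs_wordRatio_append_sub_le hε.1
  refine ⟨2 * C, by positivity, γ, hγ, fun u v _ _ p hpu hpv htake _ m => ?_⟩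
  obtain ⟨a, ha, b, hb, hab, hS⟩ := hg.exists_scalingData_eq_wordRatio one_ne_zero m
  have hu := hratio a ha b hb hab (u.take p) (u.drop p)
  have hv := hratio a ha b hb hab (u.take p) (v.drop p)
  rw [List.take_append_drop, List.length_take_of_le hpu] at hu
  rw [htake, List.take_append_drop, List.length_take_of_le hpv, ← htake] at hv
  rw [hS, hS]
  calc |wordRatio g u a b - wordRatio g v a b|
      ≤ |wordRatio g u a b - wordRatio g (u.take p) a b|
        + |wordRatio g (u.take p) a b - wordRatio g v a b| := abs_sub_le _ _ _
    _ ≤ C * γ ^ p + C * γ ^ p := add_le_add hu (by rwa [abs_sub_comm])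
    _ = 2 * C * γ ^ p := by ring

/-- for a `C^{1+ε}` Cantor system there are `K > 0` and `γ ∈ (0,1)` with
`|S_n(u) - S_m(v)|_∞ ≤ K γ^p` for all nonempty finite words `u, v`, where `p` is the length
of their longest common initial segment. -/
theorem stmt2 (d : ℕ) (hd : 2 ≤ d) (ε : ℝ) (hε : ε ∈ Set.Ioc (0:ℝ) 1)
    (g : Fin d → ℝ → ℝ) (hg : IsCantorSystem 1 ε g) :
    ∃ K > 0, ∃ γ ∈ Set.Ioo (0:ℝ) 1,
      ∀ u v : List (Fin d), u ≠ [] → v ≠ [] →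
        ∀ p : ℕ, p ≤ u.length → p ≤ v.length → u.take p = v.take p →
          (p < u.length → p < v.length → u[p]? ≠ v[p]?) →
          ∀ m, |scalingData g u m - scalingData g v m| ≤ K * γ ^ p :=
  stmt2_general d ε hε g hg
end
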